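/- Let S ⊂ {1,...,n} with |S| = d, let γ > 0, and define g_S(x) = 2^{-d} Σ_{θ ∈ {±1}^d} Π_{i ∉ S} φ₀(x_i) Π_{i ∈ S} φ_{θ_i γ}(x_i), where φ_μ is the univariate N(μ,1) density. Then for two such sets S₁, S₂, ∫ g_{S₁} g_{S₂} / f = (cosh γ²)^{|S₁ ∩ S₂|}, where f(x) = Π_{i=1}^n φ₀(x_i). -/

import Mathlib

open MeasureTheory

/-- The univariate `N(a, 1)` density. -/
noncomputable def normalDensity (a t : ℝ) : ℝ :=
  (2 * Real.pi) ^ (-(1 : ℝ) / 2) * Real.exp (-(t - a) ^ 2 / 2)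

/-- Uniform mixture over Rademacher sign patterns of a signal of amplitude `γ`
supported on the coordinates in `S`. -/
noncomputable def rademacherMix (n : ℕ) (γ : ℝ) (S : Finset (Fin n)) (x : Fin n → ℝ) : ℝ :=
  (∑ θ : {i // i ∈ S} → Bool,
      (∏ i ∈ Sᶜ, normalDensity 0 (x i)) *
        ∏ i ∈ S.attach, normalDensity (if θ i then γ else -γ) (x i)) / 2 ^ S.card

/-!
Each mixture is an average over sign patterns `θ` of product Gaussians whose mean vector `μ_θ` has
entries `±γ` on `S` and `0` off `S`. Coordinatewise `φ_a φ_b / φ_0 = e^{ab} φ_{a+b}`, so integrating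
the product of two components against `1 / f` gives `∏ᵢ e^{μᵢ νᵢ}`. Summing over the second sign
pattern factorizes into `∏_{j ∈ S₂} 2 cosh (γ μ_θ j)`, whose factors are `2 cosh γ²` on `S₁ ∩ S₂`
and `2` elsewhere, whatever `θ` is.
-/

open Real Finset

lemma normalDensity_eq_gaussianPDFReal (a : ℝ) :
    normalDensity a = ProbabilityTheory.gaussianPDFReal a 1 := by
  funext t
  rw [normalDensity, ProbabilityTheory.gaussianPDFReal, NNReal.coe_one, mul_one, mul_one,
    sqrt_eq_rpow, ← rpow_neg (by positivity)]
  norm_num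

lemma normalDensity_pos (a t : ℝ) : 0 < normalDensity a t := by
  rw [normalDensity]; positivity

lemma integrable_normalDensity (a : ℝ) : Integrable (normalDensity a) := by
  rw [normalDensity_eq_gaussianPDFReal]
  exact ProbabilityTheory.integrable_gaussianPDFReal a 1

lemma integral_normalDensity (a : ℝ) : ∫ t, normalDensity a t = 1 := by
  rw [normalDensity_eq_gaussianPDFReal]
  exact ProbabilityTheory.integral_gaussianPDFReal_eq_one a one_ne_zero

lemma normalDensity_mul_normalDensity_div (a b t : ℝ) :
    normalDensity a t * normalDensity b t / normalDensity 0 t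
      = exp (a * b) * normalDensity (a + b) t := by
  rw [div_eq_iff (normalDensity_pos 0 t).ne']
  simp only [normalDensity]
  rw [mul_mul_mul_comm, ← exp_add, mul_assoc (exp (a * b)), mul_mul_mul_comm,
    ← exp_add, mul_left_comm, ← exp_add]
  ring_nf

section ProductDensity

variable {ι : Type*} [Fintype ι]

lemma prod_normalDensity_mul_div (a b x : ι → ℝ) :
    (∏ i, normalDensity (a i) (x i)) * (∏ i, normalDensity (b i) (x i))
        / ∏ i, normalDensity 0 (x i)
      = ∏ i, exp (a i * b i) * normalDensity (a i + b i) (x i) := by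
  rw [← prod_mul_distrib, ← prod_div_distrib]
  exact prod_congr rfl fun i _ => normalDensity_mul_normalDensity_div _ _ _

lemma integrable_prod_normalDensity_mul_div (a b : ι → ℝ) :
    Integrable fun x : ι → ℝ =>
      (∏ i, normalDensity (a i) (x i)) * (∏ i, normalDensity (b i) (x i))
        / ∏ i, normalDensity 0 (x i) := by
  simp_rw [prod_normalDensity_mul_div]
  exact Integrable.fintype_prod fun i => (integrable_normalDensity _).const_mul _

lemma integral_prod_normalDensity_mul_div (a b : ι → ℝ) :
    ∫ x : ι → ℝ,
        (∏ i, normalDensity (a i) (x i)) * (∏ i, normalDensity (b i) (x i))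
          / ∏ i, normalDensity 0 (x i)
      = ∏ i, exp (a i * b i) := by
  simp_rw [prod_normalDensity_mul_div]
  rw [integral_fintype_prod_volume_eq_prod
    (fun i t => exp (a i * b i) * normalDensity (a i + b i) t)]
  simp_rw [integral_const_mul, integral_normalDensity, mul_one]

lemma integral_mixture_mul_div {α β : Type*} [Fintype α] [Fintype β]
    (a : α → ι → ℝ) (b : β → ι → ℝ) :
    ∫ x : ι → ℝ,
        (∑ s, ∏ i, normalDensity (a s i) (x i)) * (∑ t, ∏ i, normalDensity (b t i) (x i))
          / ∏ i, normalDensity 0 (x i)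
      = ∑ s, ∑ t, ∏ i, exp (a s i * b t i) := by
  simp_rw [sum_mul_sum, sum_div]
  rw [integral_finsetSum _ fun s _ =>
    integrable_finsetSum _ fun t _ => integrable_prod_normalDensity_mul_div _ _]
  refine sum_congr rfl fun s _ => ?_
  rw [integral_finsetSum _ fun t _ => integrable_prod_normalDensity_mul_div _ _]
  simp_rw [integral_prod_normalDensity_mul_div]

end ProductDensity

section SignPatterns

variable {ι : Type*} [DecidableEq ι]

noncomputable def signedMean (γ : ℝ) (S : Finset ι) (θ : S → Bool) (i : ι) : ℝ :=
  if h : i ∈ S then (if θ ⟨i, h⟩ then γ else -γ) else 0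

lemma rademacherMix_eq_sum (n : ℕ) (γ : ℝ) (S : Finset (Fin n)) (x : Fin n → ℝ) :
    rademacherMix n γ S x
      = (∑ θ : S → Bool, ∏ i, normalDensity (signedMean γ S θ i) (x i)) / 2 ^ #S := by
  rw [rademacherMix]
  congr 1
  refine sum_congr rfl fun θ _ => ?_
  rw [← prod_mul_prod_compl S, mul_comm, ← prod_attach S]
  congr 1
  · exact prod_congr rfl fun j _ => by rw [signedMean, dif_pos j.2]
  · exact prod_congr rfl fun i hi => by rw [signedMean, dif_neg (mem_compl.mp hi)]

lemma sum_prod_exp_mul_signedMean [Fintype ι] (c : ι → ℝ) (γ : ℝ) (S : Finset ι) :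
    ∑ θ : S → Bool, ∏ i, exp (c i * signedMean γ S θ i) = ∏ j ∈ S, 2 * cosh (c j * γ) := by
  have restrict (θ : S → Bool) :
      ∏ i, exp (c i * signedMean γ S θ i) = ∏ j : S, exp (c j * if θ j then γ else -γ) := by
    rw [← prod_subset (subset_univ S) fun i _ hi => by rw [signedMean, dif_neg hi, mul_zero,
      exp_zero], ← prod_coe_sort]
    exact prod_congr rfl fun j _ => by rw [signedMean, dif_pos j.2]
  simp_rw [restrict]
  rw [← Fintype.prod_sum fun (j : S) (b : Bool) => exp (c j * if b then γ else -γ),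
    ← prod_coe_sort S]
  refine prod_congr rfl fun j _ => ?_
  rw [Fintype.sum_bool, cosh_eq]
  simp only [if_true, Bool.false_eq_true, if_false, mul_neg]
  ring

lemma cosh_signedMean_mul (γ : ℝ) (S : Finset ι) (θ : S → Bool) (i : ι) :
    cosh (signedMean γ S θ i * γ) = if i ∈ S then cosh (γ ^ 2) else 1 := by
  unfold signedMean
  split_ifs <;> simp [sq]

lemma prod_cosh_signedMean_mul (γ : ℝ) (S T : Finset ι) (θ : S → Bool) :
    ∏ j ∈ T, cosh (signedMean γ S θ j * γ) = cosh (γ ^ 2) ^ #(T ∩ S) := by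
  simp_rw [cosh_signedMean_mul, prod_ite_mem, prod_const]

lemma sum_sum_prod_exp_signedMean_mul [Fintype ι] (γ : ℝ) (S T : Finset ι) :
    ∑ θ : S → Bool, ∑ η : T → Bool, ∏ i, exp (signedMean γ S θ i * signedMean γ T η i)
      = 2 ^ #S * 2 ^ #T * cosh (γ ^ 2) ^ #(S ∩ T) := by
  simp_rw [sum_prod_exp_mul_signedMean, prod_mul_distrib, prod_const,
    prod_cosh_signedMean_mul, sum_const, inter_comm T S]
  simp only [card_univ, Fintype.card_fun, Fintype.card_bool, Fintype.card_coe, nsmul_eq_mul,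
    Nat.cast_pow, Nat.cast_ofNat]
  ring

end SignPatterns

theorem rademacher_mix_affinity_general (n : ℕ) (γ : ℝ) (S₁ S₂ : Finset (Fin n)) :
    ∫ x : Fin n → ℝ,
        rademacherMix n γ S₁ x * rademacherMix n γ S₂ x / ∏ i, normalDensity 0 (x i)
      = Real.cosh (γ ^ 2) ^ (S₁ ∩ S₂).card := by
  simp_rw [rademacherMix_eq_sum, div_mul_div_comm, div_right_comm _ ((2 : ℝ) ^ _ * 2 ^ _)]
  rw [integral_div, integral_mixture_mul_div, sum_sum_prod_exp_signedMean_mul]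
  field_simp

theorem rademacher_mix_affinity (n d : ℕ) (γ : ℝ) (hγ : 0 < γ)
    (S₁ S₂ : Finset (Fin n)) (hS₁ : S₁.card = d) (hS₂ : S₂.card = d) :
    ∫ x : Fin n → ℝ,
        rademacherMix n γ S₁ x * rademacherMix n γ S₂ x / ∏ i, normalDensity 0 (x i)
      = Real.cosh (γ ^ 2) ^ (S₁ ∩ S₂).card :=
  rademacher_mix_affinity_general n γ S₁ S₂
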